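/- Let f : ℂ → ℂ be entire, let R > 0, and set C_R = 1 − e^{−π R²}. Then for every z ∈ ℂ, |f(z)|² e^{−π|z|²} · C_R ≤ ∫_{D(z,R)} |f(w)|² e^{−π|w|²} dA(w), where D(z, R) is the open disc of radius R centered at z. -/

import Mathlib

/-!
Twisting `f²` by `e^{π(|z|² - 2 z̄ w)}` gives an entire function `H` with
`|H w| e^{-π|w - z|²} = |f w|² e^{-π|w|²}`, which turns the Gaussian weight into one that is
radial about `z`. In polar coordinates about `z`, the integral of `H` against a radial weight is
an integral of circle averages of `H`, each equal to `H z` by the mean value property; taking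
norms gives `|H z| ∫₀^R 2πr e^{-πr²} dr ≤ ∫_{D(z,R)} |H w| e^{-π|w - z|²} dA(w)`, and the
radial integral is `1 - e^{-πR²}`.
-/

open MeasureTheory Metric Set Real

theorem Complex.continuous_polarCoord_symm : Continuous Complex.polarCoord.symm := by
  rw [show ⇑Complex.polarCoord.symm = _ from funext Complex.polarCoord_symm_apply]
  fun_prop

theorem Complex.polarCoord_symm_eq_circleMap (r θ : ℝ) :
    Complex.polarCoord.symm (r, θ) = circleMap 0 r θ := by
  rw [Complex.polarCoord_symm_apply, circleMap, Complex.exp_mul_I]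
  push_cast
  ring

section PolarIntegral

variable {E : Type*} [NormedAddCommGroup E] [NormedSpace ℝ E]

theorem circleAverage_eq_intervalIntegral_neg_pi_pi (g : ℂ → E) (c : ℂ) (r : ℝ) :
    circleAverage g c r = (2 * π)⁻¹ • ∫ θ in -π..π, g (circleMap c r θ) := by
  rw [circleAverage_eq_integral_add (-π), intervalIntegral.integral_comp_add_right
    (fun θ ↦ g (circleMap c r θ))]
  ring_nf

theorem setIntegral_ball_zero_eq_setIntegral_polar (g : ℂ → E) (R : ℝ) :
    ∫ u in ball 0 R, g u
      = ∫ p in Ioo 0 R ×ˢ Ioo (-π) π, p.1 • g (Complex.polarCoord.symm p) := by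
  rw [← integral_indicator measurableSet_ball, ← Complex.integral_comp_polarCoord_symm,
    ← inter_eq_right.mpr (?_ : Ioo 0 R ×ˢ Ioo (-π) π ⊆ polarCoord.target),
    ← setIntegral_indicator (measurableSet_Ioo.prod measurableSet_Ioo)]
  · refine setIntegral_congr_fun polarCoord.open_target.measurableSet fun p hp ↦ ?_
    obtain ⟨hr : 0 < p.1, hθ⟩ := hp
    have hmem : Complex.polarCoord.symm p ∈ ball 0 R ↔ p ∈ Ioo 0 R ×ˢ Ioo (-π) π := by
      simp [mem_prod, hr, hθ, abs_of_pos hr]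
    by_cases h : p ∈ Ioo 0 R ×ˢ Ioo (-π) π
    · rw [indicator_of_mem (hmem.2 h), indicator_of_mem h]
    · rw [indicator_of_notMem (mt hmem.1 h), indicator_of_notMem h, smul_zero]
  · rw [polarCoord_target]
    exact prod_mono Ioo_subset_Ioi_self subset_rfl

theorem setIntegral_ball_zero_eq_intervalIntegral_circleAverage {g : ℂ → E} {R : ℝ}
    (hR : 0 ≤ R) (hg : ContinuousOn g (closedBall 0 R)) :
    ∫ u in ball 0 R, g u = ∫ r in 0..R, (2 * π * r) • circleAverage g 0 r := by
  set F : ℝ × ℝ → E := fun p ↦ p.1 • g (Complex.polarCoord.symm p)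
  have hF : IntegrableOn F (Ioo 0 R ×ˢ Ioo (-π) π) := by
    refine ContinuousOn.integrableOn_compact (isCompact_Icc.prod isCompact_Icc) ?_
      |>.mono_set (prod_mono Ioo_subset_Icc_self Ioo_subset_Icc_self)
    refine continuousOn_fst.smul (hg.comp Complex.continuous_polarCoord_symm.continuousOn ?_)
    rintro ⟨r, θ⟩ ⟨⟨hr, hrR⟩, -⟩
    simpa [abs_of_nonneg hr] using hrR
  have hinner (r : ℝ) : ∫ θ in Ioo (-π) π, F (r, θ) = (2 * π * r) • circleAverage g 0 r := by
    rw [circleAverage_eq_intervalIntegral_neg_pi_pi, smul_smul,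
      intervalIntegral.integral_of_le (by linarith [pi_pos]), integral_Ioc_eq_integral_Ioo,
      ← integral_smul]
    refine integral_congr_ae (ae_of_all _ fun θ ↦ ?_)
    simp only [F, Complex.polarCoord_symm_eq_circleMap]
    field_simp
  rw [setIntegral_ball_zero_eq_setIntegral_polar, Measure.volume_eq_prod,
    setIntegral_prod F hF, intervalIntegral.integral_of_le hR, integral_Ioc_eq_integral_Ioo]
  simp only [hinner]

theorem setIntegral_ball_eq_intervalIntegral_circleAverage {g : ℂ → E} {c : ℂ} {R : ℝ}
    (hR : 0 ≤ R) (hg : ContinuousOn g (closedBall c R)) :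
    ∫ u in ball c R, g u = ∫ r in 0..R, (2 * π * r) • circleAverage g c r := by
  have htrans := (measurePreserving_add_right volume c).setIntegral_preimage_emb
    (measurableEmbedding_addRight c) g (ball c R)
  rw [preimage_add_right_ball, sub_self] at htrans
  simp_rw [← htrans, ← circleAverage_map_add_const (f := g)]
  refine setIntegral_ball_zero_eq_intervalIntegral_circleAverage hR (hg.comp (by fun_prop) ?_)
  intro u hu
  simpa using hu

end PolarIntegral

section RadialMeanValue

variable {F : Type*} [NormedAddCommGroup F] [NormedSpace ℂ F] [CompleteSpace F]
  {H : ℂ → F} {w : ℝ → ℝ} {c : ℂ} {R : ℝ}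

theorem DiffContOnCl.setIntegral_ball_radial_smul (hH : DiffContOnCl ℂ H (ball c R))
    (hw : ContinuousOn w (Icc 0 R)) (hR : 0 ≤ R) :
    ∫ u in ball c R, w ‖u - c‖ • H u = (∫ r in 0..R, 2 * π * r * w r) • H c := by
  have hcont : ContinuousOn (fun u ↦ w ‖u - c‖ • H u) (closedBall c R) :=
    (hw.comp (by fun_prop) fun u hu ↦ ⟨norm_nonneg _, mem_closedBall_iff_norm.1 hu⟩).smul
      hH.continuousOn_ball
  rw [setIntegral_ball_eq_intervalIntegral_circleAverage hR hcont,
    ← intervalIntegral.integral_smul_const]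
  refine intervalIntegral.integral_congr fun r hr ↦ ?_
  rw [uIcc_of_le hR] at hr
  have hr_abs : |r| = r := abs_of_nonneg hr.1
  have hsphere : EqOn (fun u ↦ w ‖u - c‖ • H u) (fun u ↦ w r • H u) (sphere c |r|) := by
    intro u hu
    rw [mem_sphere_iff_norm, hr_abs] at hu
    simp only [hu]
  rw [circleAverage_congr_sphere hsphere, circleAverage_fun_smul,
    (hH.mono (ball_subset_ball (hr_abs.le.trans hr.2))).circleAverage, smul_smul, mul_assoc]

theorem DiffContOnCl.norm_mul_integral_radial_le_setIntegral_ball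
    (hH : DiffContOnCl ℂ H (ball c R)) (hw : ContinuousOn w (Icc 0 R))
    (hw_nonneg : ∀ r ∈ Icc 0 R, 0 ≤ w r) (hR : 0 ≤ R) :
    ‖H c‖ * ∫ r in 0..R, 2 * π * r * w r ≤ ∫ u in ball c R, ‖H u‖ * w ‖u - c‖ := by
  have hmass : 0 ≤ ∫ r in 0..R, 2 * π * r * w r :=
    intervalIntegral.integral_nonneg hR fun r hr ↦
      mul_nonneg (mul_nonneg two_pi_pos.le hr.1) (hw_nonneg r hr)
  calc ‖H c‖ * ∫ r in 0..R, 2 * π * r * w r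
      = ‖∫ u in ball c R, w ‖u - c‖ • H u‖ := by
        rw [hH.setIntegral_ball_radial_smul hw hR, norm_smul, Real.norm_of_nonneg hmass, mul_comm]
    _ ≤ ∫ u in ball c R, ‖w ‖u - c‖ • H u‖ := norm_integral_le_integral_norm _
    _ = ∫ u in ball c R, ‖H u‖ * w ‖u - c‖ := by
        refine setIntegral_congr_fun measurableSet_ball fun u hu ↦ ?_
        rw [norm_smul, Real.norm_of_nonneg
          (hw_nonneg _ ⟨norm_nonneg _, (mem_ball_iff_norm.1 hu).le⟩), mul_comm]

end RadialMeanValue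

theorem integral_two_mul_mul_exp_neg_mul_sq (b R : ℝ) :
    ∫ r in 0..R, 2 * b * r * exp (-b * r ^ 2) = 1 - exp (-b * R ^ 2) := by
  have hderiv (r : ℝ) :
      HasDerivAt (fun s ↦ -exp (-b * s ^ 2)) (2 * b * r * exp (-b * r ^ 2)) r := by
    refine (((hasDerivAt_pow 2 r).const_mul (-b)).exp).neg.congr_deriv ?_
    push_cast
    ring
  rw [intervalIntegral.integral_eq_sub_of_hasDerivAt (fun r _ ↦ hderiv r)
    ((by fun_prop : Continuous _).intervalIntegrable _ _)]
  simp only [ne_eq, OfNat.ofNat_ne_zero, not_false_eq_true, zero_pow, mul_zero, exp_zero]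
  ring

theorem norm_cexp_mul_exp_neg_mul_norm_sub_sq (a : ℝ) (z w : ℂ) :
    ‖Complex.exp (a * (‖z‖ ^ 2 - 2 * (starRingEnd ℂ) z * w))‖ * exp (-a * ‖w - z‖ ^ 2)
      = exp (-a * ‖w‖ ^ 2) := by
  rw [Complex.norm_exp, ← exp_add]
  congr 1
  have hre : (a * (‖z‖ ^ 2 - 2 * (starRingEnd ℂ) z * w) : ℂ).re
      = a * (‖z‖ ^ 2 - 2 * (w * (starRingEnd ℂ) z).re) := by
    rw [mul_comm w, Complex.re_ofReal_mul, Complex.sub_re, mul_assoc]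
    congr 2
    · norm_cast
    · simp
  rw [hre, Complex.sq_norm, Complex.sq_norm, Complex.sq_norm, Complex.normSq_sub]
  ring

theorem sq_abs_mul_gaussian_mul_le_integral_ball
    (f : ℂ → ℂ) (hf : Differentiable ℂ f) (R : ℝ) (hR : 0 < R) (z : ℂ) :
    ‖f z‖ ^ 2 * Real.exp (-Real.pi * ‖z‖ ^ 2) * (1 - Real.exp (-Real.pi * R ^ 2))
      ≤ ∫ w in Metric.ball z R, ‖f w‖ ^ 2 * Real.exp (-Real.pi * ‖w‖ ^ 2) := by
  set H : ℂ → ℂ := fun w ↦ f w ^ 2 * Complex.exp (π * (‖z‖ ^ 2 - 2 * (starRingEnd ℂ) z * w))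
  have hH : DiffContOnCl ℂ H (ball z R) := ((hf.pow 2).mul (by fun_prop)).diffContOnCl
  have hweight (w : ℂ) : ‖H w‖ * exp (-π * ‖w - z‖ ^ 2) = ‖f w‖ ^ 2 * exp (-π * ‖w‖ ^ 2) := by
    rw [norm_mul, norm_pow, mul_assoc, norm_cexp_mul_exp_neg_mul_norm_sub_sq]
  have hHz : ‖H z‖ = ‖f z‖ ^ 2 * exp (-π * ‖z‖ ^ 2) := by
    simpa using hweight z
  calc ‖f z‖ ^ 2 * exp (-π * ‖z‖ ^ 2) * (1 - exp (-π * R ^ 2))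
      = ‖H z‖ * ∫ r in 0..R, 2 * π * r * exp (-π * r ^ 2) := by
        rw [hHz, integral_two_mul_mul_exp_neg_mul_sq]
    _ ≤ ∫ w in ball z R, ‖H w‖ * exp (-π * ‖w - z‖ ^ 2) :=
        hH.norm_mul_integral_radial_le_setIntegral_ball (by fun_prop)
          (fun r _ ↦ (exp_pos _).le) hR.le
    _ = ∫ w in ball z R, ‖f w‖ ^ 2 * exp (-π * ‖w‖ ^ 2) := by simp_rw [hweight]
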